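/- (Support containment for the LASSO primal–dual witness; Proposition 1, part 1.) Let S ⊆ {1,…,N}, let γ* ∈ ℝ^N satisfy γ*_j = 0 for every j ∉ S, let ε ∈ ℝ^N, and set y := Ũ(γ* + ε) ∈ ℝ^m. Assume G := Ũ_SᵀŨ_S is invertible, λ > 0, and that the strict dual feasibility condition holds: for every vector v ∈ ℝ^S with ‖v‖_∞ ≤ 1 and every index j ∉ S, |λ·(Ũ_jᵀ Ũ_S G⁻¹ v) + Ũ_jᵀ (I_m − Π_S) Ũ ε| < λ. Then every global minimizer γ̂ of f_{y,λ} satisfies γ̂_j = 0 for all j ∉ S. -/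

import Mathlib

/-!
Primal–dual witness. Let `γ` minimize the LASSO objective among vectors supported on `S`, and
let `a = Uᵀ (y - U γ)` be the correlations of the columns with its residual. Coordinatewise
optimality on `S` makes `a k` a subgradient of `lam * |·|` at `γ k` for `k ∈ S`. Since `y - U γ`
lies in `U ε + range U_S`, the normal equations give `y - U γ = U_S G⁻¹ a_S + (1 - Π_S) U ε`, so
off `S` the correlation `a j` is exactly the quantity bounded by the dual feasibility hypothesis
at `v = a_S / lam`; hence `|a j| < lam`. Finally, for every `γhat`,
`f γhat - f γ = ½ ‖U (γhat - γ)‖² + ∑ₖ (lam |γhat k| - a k γhat k)`, a sum of nonnegative terms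
whose `j`-th term is at least `(lam - |a j|) |γhat j|`, so a minimizer `γhat` vanishes off `S`.
-/

open Matrix Finset Filter Set Topology

lemma le_of_forall_mem_Ioo_le_add_mul {a b c : ℝ} (h : ∀ t ∈ Ioo (0 : ℝ) 1, a ≤ b + c * t) :
    a ≤ b := by
  have hlim : Tendsto (fun t : ℝ => b + c * t) (𝓝[>] 0) (𝓝 b) :=
    ((continuous_const.add (continuous_const.mul continuous_id)).tendsto' 0 b
      (by simp)).mono_left nhdsWithin_le_nhds
  exact ge_of_tendsto hlim (eventually_of_mem (Ioo_mem_nhdsGT one_pos) h)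

/-- If `t ↦ lam * |b + t| - t * a + c * t ^ 2` is minimal at `t = 0`, then `a` is a subgradient
of `lam * |·|` at `b`. -/
lemma abs_le_and_mul_eq_of_forall_le {a b c lam : ℝ} (hlam : 0 ≤ lam)
    (h : ∀ t, t * a ≤ c * t ^ 2 + lam * (|b + t| - |b|)) : |a| ≤ lam ∧ a * b = lam * |b| := by
  have hstep : ∀ t, lam * (|b + t| - |b|) ≤ lam * |t| := fun t =>
    mul_le_mul_of_nonneg_left (by simpa using abs_sub_abs_le_abs_sub (b + t) b) hlam
  have hupper : a ≤ lam := le_of_forall_mem_Ioo_le_add_mul (c := c) fun t ht => by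
    have := (h t).trans (add_le_add_right (hstep t) _)
    rw [abs_of_pos ht.1] at this
    nlinarith [ht.1]
  have hlower : -a ≤ lam := le_of_forall_mem_Ioo_le_add_mul (c := c) fun t ht => by
    have := (h (-t)).trans (add_le_add_right (hstep (-t)) _)
    rw [abs_neg, abs_of_pos ht.1] at this
    nlinarith [ht.1]
  have habs : |a| ≤ lam := abs_le.2 ⟨by linarith, hupper⟩
  refine ⟨habs, le_antisymm ?_ ?_⟩
  · calc a * b ≤ |a| * |b| := (le_abs_self _).trans (abs_mul a b).le
      _ ≤ lam * |b| := mul_le_mul_of_nonneg_right habs (abs_nonneg b)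
  · -- perturb `b` towards `0`
    refine le_of_forall_mem_Ioo_le_add_mul (c := c * b ^ 2) fun s hs => ?_
    have := h (-s * b)
    rw [show b + -s * b = (1 - s) * b by ring, abs_mul, abs_of_pos (by linarith [hs.2])] at this
    nlinarith [hs.1]

section Lasso

variable {ι κ : Type*} [Fintype ι] [Fintype κ]

noncomputable def lassoObjective (U : Matrix ι κ ℝ) (y : ι → ℝ) (lam : ℝ) (γ : κ → ℝ) : ℝ :=
  (1 / 2) * ∑ i, (y i - (U *ᵥ γ) i) ^ 2 + lam * ∑ j, |γ j|

lemma lassoObjective_add (U : Matrix ι κ ℝ) (y : ι → ℝ) (lam : ℝ) (γ d : κ → ℝ) :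
    lassoObjective U y lam (γ + d) = lassoObjective U y lam γ + (1 / 2) * ∑ i, (U *ᵥ d) i ^ 2 +
      ∑ k, (lam * |γ k + d k| - lam * |γ k| - d k * (Uᵀ *ᵥ (y - U *ᵥ γ)) k) := by
  set r := y - U *ᵥ γ
  have hcross : ∑ k, d k * (Uᵀ *ᵥ r) k = ∑ i, (U *ᵥ d) i * r i := by
    change d ⬝ᵥ (Uᵀ *ᵥ r) = (U *ᵥ d) ⬝ᵥ r
    rw [mulVec_transpose, dotProduct_comm, ← dotProduct_mulVec, dotProduct_comm]
  have hsq : ∑ i, (y i - (U *ᵥ (γ + d)) i) ^ 2 =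
      ∑ i, r i ^ 2 - 2 * ∑ i, (U *ᵥ d) i * r i + ∑ i, (U *ᵥ d) i ^ 2 := by
    rw [mul_sum, ← sum_sub_distrib, ← sum_add_distrib]
    refine sum_congr rfl fun i _ => ?_
    simp only [r, mulVec_add, Pi.add_apply, Pi.sub_apply]
    ring
  have habs : ∑ k, (lam * |γ k + d k| - lam * |γ k| - d k * (Uᵀ *ᵥ r) k) =
      lam * ∑ k, |γ k + d k| - lam * ∑ k, |γ k| - ∑ k, d k * (Uᵀ *ᵥ r) k := by
    simp only [sum_sub_distrib, mul_sum]
  rw [habs, hcross, lassoObjective, lassoObjective, hsq]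
  simp only [r, Pi.add_apply, Pi.sub_apply]
  ring

lemma tendsto_lassoObjective_cocompact (U : Matrix ι κ ℝ) (y : ι → ℝ) {lam : ℝ} (hlam : 0 < lam) :
    Tendsto (lassoObjective U y lam) (cocompact _) atTop := by
  refine tendsto_atTop_mono (fun γ => ?_) (tendsto_norm_cocompact_atTop.const_mul_atTop hlam)
  have hnorm : ‖γ‖ ≤ ∑ j, |γ j| := (pi_norm_le_iff_of_nonneg (by positivity)).2 fun j =>
    single_le_sum (f := fun j => |γ j|) (fun _ _ => abs_nonneg _) (mem_univ j)
  have : 0 ≤ (1 / 2) * ∑ i, (y i - (U *ᵥ γ) i) ^ 2 := by positivity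
  rw [lassoObjective]
  nlinarith

lemma continuous_lassoObjective (U : Matrix ι κ ℝ) (y : ι → ℝ) (lam : ℝ) :
    Continuous (lassoObjective U y lam) := by
  unfold lassoObjective
  fun_prop

lemma exists_isMinOn_lassoObjective (U : Matrix ι κ ℝ) (y : ι → ℝ) {lam : ℝ} (hlam : 0 < lam)
    {s : Set (κ → ℝ)} (hs : IsClosed s) (hs₀ : s.Nonempty) :
    ∃ γ ∈ s, IsMinOn (lassoObjective U y lam) s γ :=
  (continuous_lassoObjective U y lam).continuousOn.exists_isMinOn' hs hs₀.some_mem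
    (((tendsto_lassoObjective_cocompact U y hlam).eventually_ge_atTop _).filter_mono inf_le_left)

lemma lassoObjective_single (U : Matrix ι κ ℝ) (y : ι → ℝ) (lam : ℝ) (γ : κ → ℝ)
    [DecidableEq κ] (k : κ) (t : ℝ) :
    lassoObjective U y lam (γ + Pi.single k t) = lassoObjective U y lam γ +
      (1 / 2) * (∑ i, U i k ^ 2) * t ^ 2 +
      (lam * |γ k + t| - lam * |γ k| - t * (Uᵀ *ᵥ (y - U *ᵥ γ)) k) := by
  rw [lassoObjective_add, Fintype.sum_eq_single k fun j hj => by simp [hj]]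
  simp only [mulVec_single, Pi.smul_apply, op_smul_eq_mul, col_apply, Pi.single_eq_same,
    mul_pow, ← sum_mul]
  ring

lemma abs_le_and_mul_eq_of_le_lassoObjective_single (U : Matrix ι κ ℝ) (y : ι → ℝ) {lam : ℝ}
    (hlam : 0 ≤ lam) {γ : κ → ℝ} [DecidableEq κ] {k : κ}
    (hmin : ∀ t, lassoObjective U y lam γ ≤ lassoObjective U y lam (γ + Pi.single k t)) :
    |(Uᵀ *ᵥ (y - U *ᵥ γ)) k| ≤ lam ∧
      (Uᵀ *ᵥ (y - U *ᵥ γ)) k * γ k = lam * |γ k| :=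
  abs_le_and_mul_eq_of_forall_le (c := (1 / 2) * ∑ i, U i k ^ 2) hlam fun t => by
    have := hmin t
    rw [lassoObjective_single] at this
    linarith

lemma eq_zero_of_lassoObjective_le (U : Matrix ι κ ℝ) (y : ι → ℝ) {lam : ℝ} {γ γhat : κ → ℝ}
    (hle : ∀ k, |(Uᵀ *ᵥ (y - U *ᵥ γ)) k| ≤ lam)
    (heq : ∀ k, (Uᵀ *ᵥ (y - U *ᵥ γ)) k * γ k = lam * |γ k|)
    (hmin : lassoObjective U y lam γhat ≤ lassoObjective U y lam γ)
    {j : κ} (hj : |(Uᵀ *ᵥ (y - U *ᵥ γ)) j| < lam) : γhat j = 0 := by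
  set a := Uᵀ *ᵥ (y - U *ᵥ γ)
  set B : κ → ℝ := fun k => lam * |γ k + (γhat - γ) k| - lam * |γ k| - (γhat - γ) k * a k
  have hB : ∀ k, (lam - |a k|) * |γhat k| ≤ B k := fun k => by
    have := heq k
    simp only [B, Pi.sub_apply, add_sub_cancel]
    nlinarith [le_abs_self (a k * γhat k), abs_mul (a k) (γhat k)]
  have hB_nonneg : ∀ k, 0 ≤ B k := fun k =>
    (mul_nonneg (sub_nonneg.2 (hle k)) (abs_nonneg _)).trans (hB k)
  have hsum : ∑ k, B k ≤ 0 := by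
    have hexp := lassoObjective_add U y lam γ (γhat - γ)
    rw [add_sub_cancel] at hexp
    have : 0 ≤ (1 / 2) * ∑ i, (U *ᵥ (γhat - γ)) i ^ 2 := by positivity
    linarith
  have hj_le : (lam - |a j|) * |γhat j| ≤ 0 :=
    (hB j).trans ((single_le_sum (fun k _ => hB_nonneg k) (mem_univ j)).trans hsum)
  by_contra hne
  nlinarith [abs_pos.2 hne]

end Lasso

lemma mulVec_eq_subtype_mulVec {ι κ : Type*} [Fintype κ] (U : Matrix ι κ ℝ) (S : Finset κ)
    {γ : κ → ℝ} (hγ : ∀ j ∉ S, γ j = 0) :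
    U *ᵥ γ = (of fun i (j : S) => U i j.1) *ᵥ fun j => γ j := by
  ext i
  simp only [mulVec, dotProduct, of_apply]
  rw [sum_coe_sort S fun j => U i j * γ j]
  exact (sum_subset (subset_univ S) fun j _ hj => by rw [hγ j hj, mul_zero]).symm

lemma mulVec_add_eq_projection {ι σ R : Type*} [Fintype ι] [DecidableEq ι] [Fintype σ]
    [DecidableEq σ] [CommRing R] (A : Matrix ι σ R) (hA : IsUnit (Aᵀ * A).det) (d : σ → R)
    (w : ι → R) :
    A *ᵥ d + w = A *ᵥ ((Aᵀ * A)⁻¹ *ᵥ (Aᵀ *ᵥ (A *ᵥ d + w))) +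
      (1 - A * (Aᵀ * A)⁻¹ * Aᵀ) *ᵥ w := by
  simp only [mulVec_mulVec, mulVec_add, Matrix.mul_assoc, nonsing_inv_mul _ hA,
    sub_mulVec, one_mulVec]
  abel

lemma isClosed_setOf_supported {κ : Type*} (S : Set κ) :
    IsClosed {γ : κ → ℝ | ∀ j ∉ S, γ j = 0} := by
  simp only [Set.ofPred_forall]
  exact isClosed_iInter fun j =>
    isClosed_iInter fun _ => isClosed_eq (continuous_apply j) continuous_const

lemma transpose_mulVec_residual_apply {ι κ : Type*} [Fintype ι] [DecidableEq ι] [Fintype κ]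
    [DecidableEq κ] {U : Matrix ι κ ℝ} {S : Finset κ} {US : Matrix ι S ℝ}
    (hUS : US = of fun i j => U i j.1) (hUS_inv : IsUnit (USᵀ * US).det) {γs γ ε : κ → ℝ}
    (hγs : ∀ j ∉ S, γs j = 0) (hγ : ∀ j ∉ S, γ j = 0) {y : ι → ℝ} (hy : y = U *ᵥ (γs + ε)) (k : κ) :
    (Uᵀ *ᵥ (y - U *ᵥ γ)) k =
      (fun i => U i k) ⬝ᵥ (US *ᵥ ((USᵀ * US)⁻¹ *ᵥ (USᵀ *ᵥ (y - U *ᵥ γ)))) +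
      (fun i => U i k) ⬝ᵥ ((1 - US * (USᵀ * US)⁻¹ * USᵀ) *ᵥ (U *ᵥ ε)) := by
  have hres : y - U *ᵥ γ = US *ᵥ ((fun j : S => γs j) - fun j : S => γ j) + U *ᵥ ε := by
    rw [hy, mulVec_add, mulVec_sub, hUS, ← mulVec_eq_subtype_mulVec U S hγs,
      ← mulVec_eq_subtype_mulVec U S hγ]
    abel
  change (fun i => U i k) ⬝ᵥ _ = _
  rw [hres, ← dotProduct_add, ← mulVec_add_eq_projection US hUS_inv]

/-- (Support containment for the LASSO primal–dual witness; Proposition 1, part 1.) -/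
theorem stmt_0 (m N : ℕ) (U : Matrix (Fin m) (Fin N) ℝ)
    (S : Finset (Fin N))
    (γs : Fin N → ℝ) (hγs : ∀ j ∉ S, γs j = 0)
    (ε : Fin N → ℝ)
    (lam : ℝ) (hlam : 0 < lam)
    (US : Matrix (Fin m) {j // j ∈ S} ℝ) (hUS : US = Matrix.of fun i j => U i j.1)
    (G : Matrix {j // j ∈ S} {j // j ∈ S} ℝ) (hG : G = USᵀ * US)
    (hGinv : IsUnit G.det)
    (PiS : Matrix (Fin m) (Fin m) ℝ) (hPiS : PiS = US * G⁻¹ * USᵀ)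
    (y : Fin m → ℝ) (hy : y = U *ᵥ (γs + ε))
    (hdual : ∀ v : {j // j ∈ S} → ℝ, (∀ i, |v i| ≤ 1) →
      ∀ j ∉ S, |lam * ((fun i => U i j) ⬝ᵥ (US *ᵥ (G⁻¹ *ᵥ v))) +
        (fun i => U i j) ⬝ᵥ ((1 - PiS) *ᵥ (U *ᵥ ε))| < lam) :
    ∀ γhat : Fin N → ℝ,
      (∀ γ : Fin N → ℝ,
        (1/2) * ∑ i, (y i - (U *ᵥ γhat) i)^2 + lam * ∑ j, |γhat j| ≤
        (1/2) * ∑ i, (y i - (U *ᵥ γ) i)^2 + lam * ∑ j, |γ j|) →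
      ∀ j ∉ S, γhat j = 0 := by
  intro γhat hmin
  -- the primal–dual witness: a LASSO minimizer among the vectors supported on `S`
  obtain ⟨γ, hγ, hγmin⟩ := exists_isMinOn_lassoObjective U y hlam (s := {γ | ∀ j ∉ S, γ j = 0})
    (isClosed_setOf_supported (S : Set (Fin N))) ⟨0, fun _ _ => rfl⟩
  set a := Uᵀ *ᵥ (y - U *ᵥ γ)
  have hkkt : ∀ k ∈ S, |a k| ≤ lam ∧ a k * γ k = lam * |γ k| := fun k hk =>
    abs_le_and_mul_eq_of_le_lassoObjective_single U y hlam.le fun t =>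
      hγmin fun j hj => by simp [hγ j hj, ne_of_mem_of_not_mem hk hj |>.symm]
  have hstrict : ∀ k ∉ S, |a k| < lam := by
    intro k hk
    have hcorr : USᵀ *ᵥ (y - U *ᵥ γ) = lam • fun j : S => lam⁻¹ * a j := by
      ext j
      simp only [Pi.smul_apply, smul_eq_mul, mul_inv_cancel_left₀ hlam.ne', hUS]
      rfl
    have hak : a k = _ := transpose_mulVec_residual_apply hUS (hG ▸ hGinv) hγs hγ hy k
    rw [← hG, ← hPiS, hcorr, mulVec_smul, mulVec_smul, dotProduct_smul, smul_eq_mul] at hak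
    rw [hak]
    refine hdual _ (fun j => ?_) k hk
    rw [abs_mul, abs_inv, abs_of_pos hlam, inv_mul_le_one₀ hlam]
    exact (hkkt j j.2).1
  intro j hj
  refine eq_zero_of_lassoObjective_le U y (fun k => ?_) (fun k => ?_) (hmin γ) (hstrict j hj)
  · by_cases hk : k ∈ S
    exacts [(hkkt k hk).1, (hstrict k hk).le]
  · by_cases hk : k ∈ S
    · exact (hkkt k hk).2
    · simp [hγ k hk]
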